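/- The ratio N_p(30)/N_p(2) of the number of gaps equal to 30 in the cycle of gaps 𝒢(p#) to the number of gaps equal to 2 in 𝒢(p#) converges to 8/3 as p → ∞ through the primes. -/

import Mathlib

open Finset

/-- `b` is the next totative of `P` after `a`: `a < b`, `b` is coprime to `P`,
and no integer strictly between `a` and `b` is coprime to `P`. -/
def IsNextTot (P a b : ℕ) : Prop :=
  a < b ∧ Nat.Coprime b P ∧ ∀ x, a < x → x < b → ¬ Nat.Coprime x P

/-- Starting at `r`, the successive totatives of `P` after `r` occur at the
successive partial sums of the list of gaps `c`. -/
def MatchesGaps (P : ℕ) : ℕ → List ℕ → Prop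
  | _, [] => True
  | r, c :: cs => IsNextTot P r (r + c) ∧ MatchesGaps P (r + c) cs

open scoped Classical in
/-- `Ncount p s` : the number of (cyclic) occurrences of the constellation `s`
in the cycle of gaps `𝒢(p#)`.  Since the pattern of coprimality to `p#` is
periodic with period `p#`, this is the number of totatives `r ∈ [1, p#]` of `p#`
at which the gap pattern `s` begins. -/
noncomputable def Ncount (p : ℕ) (s : List ℕ) : ℕ :=
  ((Finset.Icc 1 (primorial p)).filter
    (fun r => Nat.Coprime r (primorial p) ∧ MatchesGaps (primorial p) r s)).card

open scoped Classical in
/-- `nCount p g j` : the number of (cyclic) occurrences in `𝒢(p#)` of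
constellations of length `j` with sum `g` (the driving terms of length `j`
for the gap `g`). -/
noncomputable def nCount (p g j : ℕ) : ℕ :=
  ((Finset.Icc 1 (primorial p)).filter
    (fun r => Nat.Coprime r (primorial p) ∧
      ∃ c : List ℕ, c.length = j ∧ c.sum = g ∧ MatchesGaps (primorial p) r c)).card

/-!
By the Chinese remainder theorem, the number `A(T)` of residues `x` modulo `p#` for which
`x + t` is a unit for every `t ∈ T` is `∏_{q ≤ p} (q - ν_q(T))`, where `ν_q(T)` counts the
residues modulo `q` met by `T`. Inclusion–exclusion over the integers strictly between `x` and
`x + g` gives `N_p(g) = ∑_{S ⊆ (0, g)} (-1)^|S| A({0, g} ∪ S)`. For `g = 2` only `S = ∅`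
contributes, because one of `x, x + 1` is even. For `g = 30` the main term `A({0, 30})` differs
from `A({0, 2})` only in the factors at `q = 3, 5`, which gives the ratio `(2 · 4) / (1 · 3)`.
Every other term has `|T| ≥ 3`, so relative to `A({0, 2})` it is, up to a constant, a product of
factors `(q - |T|) / (q - 2) ≤ 1 - 1/q` over the primes `30 < q ≤ p`, which tends to `0`
because `∑ 1/q` diverges.
-/

open Filter Topology

noncomputable def admissibleCount (P : ℕ) (T : Finset ℕ) : ℕ :=
  Nat.card {x : ZMod P // ∀ t ∈ T, IsUnit (x + t)}

def residueCount (q : ℕ) (T : Finset ℕ) : ℕ :=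
  #(T.image (Nat.cast : ℕ → ZMod q))

theorem admissibleCount_one (T : Finset ℕ) : admissibleCount 1 T = 1 :=
  Nat.card_eq_one_iff_unique.mpr ⟨inferInstance, ⟨⟨0, fun _ _ => isUnit_of_subsingleton _⟩⟩⟩

theorem admissibleCount_mul {m n : ℕ} (h : m.Coprime n) (T : Finset ℕ) :
    admissibleCount (m * n) T = admissibleCount m T * admissibleCount n T := by
  rw [admissibleCount, admissibleCount, admissibleCount, ← Nat.card_prod]
  set e := ZMod.chineseRemainder h
  refine Nat.card_congr <| (e.toEquiv.subtypeEquiv fun x => ?_).trans Equiv.subtypeProdEquivProd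
  have hunit (t : ℕ) : IsUnit (x + t) ↔ IsUnit ((e x).1 + t) ∧ IsUnit ((e x).2 + t) := by
    rw [← isUnit_map_iff e, map_add, map_natCast, Prod.isUnit_iff]
    rfl
  simp only [hunit, forall_and]
  rfl

theorem admissibleCount_prime {q : ℕ} (hq : q.Prime) (T : Finset ℕ) :
    admissibleCount q T = q - residueCount q T := by
  have := Fact.mk hq
  classical
  have hbad : ∀ x : ZMod q, (∀ t ∈ T, IsUnit (x + t)) ↔ x ∉ (T.image Nat.cast).image (- ·) := by
    intro x
    simp only [mem_image, exists_exists_and_eq_and, not_exists, not_and, isUnit_iff_ne_zero]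
    exact forall₂_congr fun t _ => by rw [neg_eq_iff_add_eq_zero, add_comm]
  rw [admissibleCount, Nat.card_congr (Equiv.subtypeEquivRight hbad), Nat.card_eq_fintype_card,
    Fintype.card_subtype_compl, Fintype.card_coe, ZMod.card,
    card_image_of_injective _ neg_injective, residueCount]

theorem admissibleCount_prod {F : Finset ℕ} (hF : ∀ q ∈ F, q.Prime) (T : Finset ℕ) :
    admissibleCount (∏ q ∈ F, q) T = ∏ q ∈ F, (q - residueCount q T) := by
  induction F using Finset.induction with
  | empty => exact admissibleCount_one T
  | insert q F hqF ih =>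
    have hq := hF q (mem_insert_self q F)
    have hF' := fun r hr => hF r (mem_insert_of_mem hr)
    have hcop : q.Coprime (∏ r ∈ F, r) := Nat.Coprime.prod_right fun r hr =>
      (Nat.coprime_primes hq (hF' r hr)).mpr (ne_of_mem_of_not_mem hr hqF).symm
    rw [prod_insert hqF, prod_insert hqF, admissibleCount_mul hcop, admissibleCount_prime hq,
      ih hF']

theorem admissibleCount_primorial (p : ℕ) (T : Finset ℕ) :
    admissibleCount (primorial p) T = ∏ q ∈ (p + 1).primesBelow, (q - residueCount q T) :=
  admissibleCount_prod (fun _ hq => Nat.prime_of_mem_primesBelow hq) T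

theorem card_filter_Icc_one_eq_card {P : ℕ} [NeZero P] (Q : ZMod P → Prop) [DecidablePred Q] :
    #((Icc 1 P).filter fun r : ℕ => Q r) = Fintype.card {x : ZMod P // Q x} := by
  rw [Fintype.card_subtype]
  refine card_nbij' (fun r => (r : ZMod P)) (fun x => (x - 1).val + 1) ?_ ?_ ?_ ?_
  · intro r hr
    simp only [coe_filter, Set.mem_ofPred_eq, mem_Icc] at hr
    simpa using hr.2
  · intro x hx
    simp only [coe_filter, Set.mem_ofPred_eq, mem_Icc, mem_univ, true_and] at hx ⊢
    exact ⟨⟨by omega, ZMod.val_lt _⟩, by simpa using hx⟩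
  · intro r hr
    simp only [coe_filter, Set.mem_ofPred_eq, mem_Icc] at hr
    obtain ⟨k, rfl⟩ := Nat.exists_eq_add_of_le' hr.1.1
    simp only [Nat.cast_add, Nat.cast_one, add_sub_cancel_right,
      ZMod.val_cast_of_lt (by omega : k < P)]
  · intro x _
    simp

def IsGapStart (P g : ℕ) (x : ZMod P) : Prop :=
  IsUnit x ∧ IsUnit (x + g) ∧ ∀ j ∈ Ioo 0 g, ¬ IsUnit (x + j)

theorem forall_lt_lt_add_iff_forall_mem_Ioo {r g : ℕ} (R : ℕ → Prop) :
    (∀ x, r < x → x < r + g → R x) ↔ ∀ j ∈ Ioo 0 g, R (r + j) := by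
  refine ⟨fun h j hj => h _ (by simp at hj; omega) (by simp at hj; omega), fun h x hrx hxg => ?_⟩
  simpa [Nat.add_sub_cancel' hrx.le] using h (x - r) (by simp; omega)

theorem Ncount_singleton {p g : ℕ} (hg : 0 < g) :
    Ncount p [g] = Nat.card {x : ZMod (primorial p) // IsGapStart (primorial p) g x} := by
  classical
  have := NeZero.of_pos (primorial_pos p)
  rw [Nat.card_eq_fintype_card, ← card_filter_Icc_one_eq_card (IsGapStart (primorial p) g), Ncount]
  refine congrArg card (filter_congr fun r _ => ?_)
  have hunit (n : ℕ) : IsUnit (n : ZMod (primorial p)) ↔ n.Coprime (primorial p) :=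
    ZMod.isUnit_iff_coprime n _
  simp only [MatchesGaps, IsNextTot, IsGapStart, and_true, ← Nat.cast_add, hunit,
    forall_lt_lt_add_iff_forall_mem_Ioo (fun x => ¬ x.Coprime (primorial p)),
    lt_add_iff_pos_right, hg, true_and]

theorem zero_notMem_insert_and_notMem_of_subset_Ioo {g : ℕ} {S : Finset ℕ} (hg : 0 < g)
    (hS : S ⊆ Ioo 0 g) : 0 ∉ insert g S ∧ g ∉ S := by
  simp only [mem_insert, not_or]
  exact ⟨⟨hg.ne, fun h => (mem_Ioo.mp (hS h)).1.false⟩, fun h => (mem_Ioo.mp (hS h)).2.false⟩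

def unitIndicator {P : ℕ} [NeZero P] (x : ZMod P) : ℤ := if IsUnit x then 1 else 0

theorem natCast_admissibleCount_eq_sum (P : ℕ) [NeZero P] (T : Finset ℕ) :
    (admissibleCount P T : ℤ) = ∑ x : ZMod P, ∏ t ∈ T, unitIndicator (x + (t : ZMod P)) := by
  rw [admissibleCount, Nat.card_eq_fintype_card, Fintype.card_subtype, natCast_card_filter]
  simp only [unitIndicator, prod_boole]

theorem natCast_card_isGapStart_eq_sum_prod (P : ℕ) [NeZero P] (g : ℕ) :
    (Nat.card {x : ZMod P // IsGapStart P g x} : ℤ) = ∑ x : ZMod P,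
      unitIndicator x * unitIndicator (x + (g : ZMod P)) *
        ∏ j ∈ Ioo 0 g, (1 - unitIndicator (x + (j : ZMod P))) := by
  have hnot (y : ZMod P) : 1 - unitIndicator y = if ¬ IsUnit y then 1 else 0 := by
    unfold unitIndicator; split_ifs <;> simp
  simp only [hnot, prod_boole]
  simp only [unitIndicator, ite_zero_mul_ite_zero, mul_one]
  unfold IsGapStart
  rw [Nat.card_eq_fintype_card, Fintype.card_subtype, natCast_card_filter]
  simp only [and_assoc]

theorem natCast_card_isGapStart_eq_sum (P : ℕ) [NeZero P] {g : ℕ} (hg : 0 < g) :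
    (Nat.card {x : ZMod P // IsGapStart P g x} : ℤ) =
      ∑ S ∈ (Ioo 0 g).powerset, (-1) ^ #S * (admissibleCount P (insert 0 (insert g S)) : ℤ) := by
  simp only [natCast_card_isGapStart_eq_sum_prod, natCast_admissibleCount_eq_sum, prod_sub,
    prod_const_one, mul_one, mul_sum]
  rw [sum_comm]
  refine sum_congr rfl fun S hS => sum_congr rfl fun x _ => ?_
  obtain ⟨h0S, hgS⟩ := zero_notMem_insert_and_notMem_of_subset_Ioo hg (mem_powerset.mp hS)
  rw [prod_insert h0S, prod_insert hgS, Nat.cast_zero, add_zero]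
  ring

theorem natCast_Ncount_singleton_sub {p g : ℕ} (hg : 0 < g) :
    (Ncount p [g] : ℤ) - admissibleCount (primorial p) {0, g} =
      ∑ S ∈ (Ioo 0 g).powerset.erase ∅,
        (-1) ^ #S * (admissibleCount (primorial p) (insert 0 (insert g S)) : ℤ) := by
  have := NeZero.of_pos (primorial_pos p)
  rw [Ncount_singleton hg, natCast_card_isGapStart_eq_sum _ hg,
    ← add_sum_erase _ _ (empty_mem_powerset _)]
  simp

theorem abs_Ncount_singleton_sub_le {p g : ℕ} (hg : 0 < g) :
    |(Ncount p [g] : ℝ) - admissibleCount (primorial p) {0, g}| ≤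
      ∑ S ∈ (Ioo 0 g).powerset.erase ∅,
        (admissibleCount (primorial p) (insert 0 (insert g S)) : ℝ) := by
  have h := congrArg (Int.cast : ℤ → ℝ) (natCast_Ncount_singleton_sub (p := p) hg)
  push_cast at h
  rw [h]
  refine (abs_sum_le_sum_abs _ _).trans_eq (sum_congr rfl fun S _ => ?_)
  simp

theorem residueCount_eq_card {q B : ℕ} {T : Finset ℕ} (hT : ∀ t ∈ T, t ≤ B) (hBq : B < q) :
    residueCount q T = #T := by
  refine card_image_of_injOn fun a ha b hb hab => ?_
  have hmod := (ZMod.natCast_eq_natCast_iff' a b q).mp hab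
  rwa [Nat.mod_eq_of_lt ((hT a ha).trans_lt hBq), Nat.mod_eq_of_lt ((hT b hb).trans_lt hBq)] at hmod

theorem residueCount_pair (q c : ℕ) : residueCount q {0, c} = if q ∣ c then 1 else 2 := by
  rw [residueCount, image_insert, image_singleton, Nat.cast_zero]
  split_ifs with h
  · simp [(ZMod.natCast_eq_zero_iff c q).mpr h]
  · exact card_pair fun h0 => h ((ZMod.natCast_eq_zero_iff c q).mp h0.symm)

theorem one_le_sub_residueCount_zero_two {q : ℕ} (hq : q.Prime) :
    1 ≤ q - residueCount q {0, 2} := by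
  have := hq.two_le
  rw [residueCount_pair]
  split_ifs with h
  · omega
  · have : q ≠ 2 := by rintro rfl; exact h dvd_rfl
    omega

theorem admissibleCount_primorial_zero_two_pos (p : ℕ) :
    0 < admissibleCount (primorial p) {0, 2} := by
  rw [admissibleCount_primorial]
  exact prod_pos fun q hq => one_le_sub_residueCount_zero_two (Nat.prime_of_mem_primesBelow hq)

theorem Ncount_two {p : ℕ} (hp : 2 ≤ p) : Ncount p [2] = admissibleCount (primorial p) {0, 2} := by
  have h := natCast_Ncount_singleton_sub (p := p) two_pos
  have hsubsets : (Ioo 0 2).powerset.erase ∅ = {{1}} := by decide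
  have hzero : admissibleCount (primorial p) (insert 0 (insert 2 {1})) = 0 := by
    rw [admissibleCount_primorial]
    refine prod_eq_zero (Nat.mem_primesBelow.mpr ⟨by omega, Nat.prime_two⟩) ?_
    decide
  rw [hsubsets, sum_singleton, hzero] at h
  omega

theorem three_mul_admissibleCount_zero_thirty {p : ℕ} (hp : 5 ≤ p) :
    3 * admissibleCount (primorial p) {0, 30} = 8 * admissibleCount (primorial p) {0, 2} := by
  have h3 : 3 ∈ (p + 1).primesBelow := Nat.mem_primesBelow.mpr ⟨by omega, Nat.prime_three⟩
  have h5 : 5 ∈ (p + 1).primesBelow.erase 3 :=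
    mem_erase.mpr ⟨by norm_num, Nat.mem_primesBelow.mpr ⟨by omega, Nat.prime_five⟩⟩
  have hrest : ∀ q ∈ ((p + 1).primesBelow.erase 3).erase 5,
      q - residueCount q {0, 30} = q - residueCount q {0, 2} := by
    intro q hq
    obtain ⟨hq5, hq3, hq⟩ : q ≠ 5 ∧ q ≠ 3 ∧ q.Prime := by
      simp only [mem_erase, Nat.mem_primesBelow] at hq
      exact ⟨hq.1, hq.2.1, hq.2.2.2⟩
    have hdvd : q ∣ 30 ↔ q ∣ 2 := by
      refine ⟨fun h => ?_, fun h => h.trans (by norm_num)⟩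
      rcases (Nat.Prime.dvd_mul hq).mp (show q ∣ 2 * 3 * 5 from h) with h | h
      · rcases (Nat.Prime.dvd_mul hq).mp h with h | h
        · exact h
        · exact absurd ((Nat.prime_dvd_prime_iff_eq hq Nat.prime_three).mp h) hq3
      · exact absurd ((Nat.prime_dvd_prime_iff_eq hq Nat.prime_five).mp h) hq5
    simp only [residueCount_pair, hdvd]
  rw [admissibleCount_primorial, admissibleCount_primorial, ← mul_prod_erase _ _ h3,
    ← mul_prod_erase _ _ h3, ← mul_prod_erase _ _ h5, ← mul_prod_erase _ _ h5, prod_congr rfl hrest]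
  simp only [residueCount_pair]
  norm_num
  ring

theorem tendsto_sum_primesBelow_one_div :
    Tendsto (fun n : ℕ => ∑ q ∈ n.primesBelow, (1 / q : ℝ)) atTop atTop := by
  have h := (not_summable_iff_tendsto_nat_atTop_of_nonneg fun n =>
    Set.indicator_nonneg (fun n _ => by positivity) n).mp not_summable_one_div_on_primes
  convert h using 2 with n
  rw [Nat.primesBelow, sum_filter]
  exact sum_congr rfl fun q _ => by simp [Set.indicator_apply]

section PrimeProducts

variable {f : ℕ → ℝ} {B : ℕ}

theorem prod_primesBelow_le_primorial_mul_exp (hf0 : ∀ q, q.Prime → 0 ≤ f q)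
    (hf : ∀ q, q.Prime → f q ≤ q) (hfB : ∀ q, q.Prime → B < q → f q ≤ 1 - 1 / q) (n : ℕ) :
    ∏ q ∈ n.primesBelow, f q ≤ primorial B *
      Real.exp (-(∑ q ∈ n.primesBelow, (1 / q : ℝ) - ∑ q ∈ (B + 1).primesBelow, (1 / q : ℝ))) := by
  set c := ∑ q ∈ (B + 1).primesBelow, (1 / q : ℝ)
  have hsmall_sub : n.primesBelow.filter (· ≤ B) ⊆ (B + 1).primesBelow := fun q hq => by
    simp only [mem_filter, Nat.mem_primesBelow] at hq ⊢
    exact ⟨by omega, hq.1.2⟩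
  have hsmall : ∏ q ∈ n.primesBelow.filter (· ≤ B), f q ≤ primorial B := by
    calc ∏ q ∈ n.primesBelow.filter (· ≤ B), f q
        ≤ ∏ q ∈ n.primesBelow.filter (· ≤ B), (q : ℝ) :=
          prod_le_prod (fun q hq => hf0 q (Nat.prime_of_mem_primesBelow (mem_filter.mp hq).1))
            fun q hq => hf q (Nat.prime_of_mem_primesBelow (mem_filter.mp hq).1)
      _ = ((∏ q ∈ n.primesBelow.filter (· ≤ B), q : ℕ) : ℝ) := (Nat.cast_prod _ _).symm
      _ ≤ primorial B := Nat.cast_le.mpr <| prod_le_prod_of_subset_of_one_le' hsmall_sub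
          fun q hq _ => (Nat.prime_of_mem_primesBelow hq).one_le
  have hsum : ∑ q ∈ n.primesBelow, (1 / q : ℝ) - c ≤
      ∑ q ∈ n.primesBelow.filter (¬ · ≤ B), (1 / q : ℝ) := by
    rw [← sum_filter_add_sum_filter_not _ (· ≤ B), sub_le_iff_le_add, add_comm]
    gcongr
    exact sum_le_sum_of_subset_of_nonneg hsmall_sub fun _ _ _ => by positivity
  have hlarge : ∏ q ∈ n.primesBelow.filter (¬ · ≤ B), f q ≤
      Real.exp (-(∑ q ∈ n.primesBelow, (1 / q : ℝ) - c)) := by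
    refine le_trans ?_ (Real.exp_le_exp.mpr (neg_le_neg hsum))
    rw [← sum_neg_distrib, Real.exp_sum]
    refine prod_le_prod (fun q hq => hf0 q ?_) fun q hq => ?_
    · exact Nat.prime_of_mem_primesBelow (mem_filter.mp hq).1
    · obtain ⟨hq, hBq⟩ := mem_filter.mp hq
      refine (hfB q (Nat.prime_of_mem_primesBelow hq) (by omega)).trans ?_
      linarith [Real.add_one_le_exp (-(1 / q : ℝ))]
  rw [← prod_filter_mul_prod_filter_not _ (· ≤ B)]
  exact mul_le_mul hsmall hlarge (prod_nonneg fun q hq =>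
    hf0 q (Nat.prime_of_mem_primesBelow (mem_filter.mp hq).1)) (Nat.cast_nonneg _)

theorem tendsto_prod_primesBelow_zero (hf0 : ∀ q, q.Prime → 0 ≤ f q)
    (hf : ∀ q, q.Prime → f q ≤ q) (hfB : ∀ q, q.Prime → B < q → f q ≤ 1 - 1 / q) :
    Tendsto (fun n : ℕ => ∏ q ∈ n.primesBelow, f q) atTop (𝓝 0) := by
  have hexp : Tendsto (fun n : ℕ => Real.exp (-(∑ q ∈ n.primesBelow, (1 / q : ℝ) -
      ∑ q ∈ (B + 1).primesBelow, (1 / q : ℝ)))) atTop (𝓝 0) :=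
    Real.tendsto_exp_atBot.comp <| tendsto_neg_atTop_atBot.comp <|
      tendsto_atTop_add_const_right _ _ tendsto_sum_primesBelow_one_div
  refine squeeze_zero (fun n => prod_nonneg fun q hq => hf0 q (Nat.prime_of_mem_primesBelow hq))
    (prod_primesBelow_le_primorial_mul_exp hf0 hf hfB) ?_
  simpa using hexp.const_mul (primorial B : ℝ)

end PrimeProducts

theorem admissibleCount_div_eq_prod (p : ℕ) (T : Finset ℕ) :
    (admissibleCount (primorial p) T : ℝ) / admissibleCount (primorial p) {0, 2} =
      ∏ q ∈ (p + 1).primesBelow,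
        ((q - residueCount q T : ℕ) : ℝ) / ((q - residueCount q {0, 2} : ℕ) : ℝ) := by
  rw [admissibleCount_primorial, admissibleCount_primorial, Nat.cast_prod, Nat.cast_prod,
    prod_div_distrib]

theorem sub_div_sub_two_le_one_sub_one_div {q k : ℝ} (hq : 3 ≤ q) (hk : 3 ≤ k) :
    (q - k) / (q - 2) ≤ 1 - 1 / q := by
  have hexpand : (1 - 1 / q) * (q - 2) = q - 3 + 2 / q := by
    field_simp
    ring
  rw [div_le_iff₀ (by linarith), hexpand]
  linarith [show 0 ≤ 2 / q by positivity]

theorem tendsto_admissibleCount_div_zero {B : ℕ} {T : Finset ℕ} (hT : ∀ t ∈ T, t ≤ B)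
    (hcard : 3 ≤ #T) :
    Tendsto (fun p => (admissibleCount (primorial p) T : ℝ) / admissibleCount (primorial p) {0, 2})
      atTop (𝓝 0) := by
  simp only [admissibleCount_div_eq_prod]
  refine (tendsto_prod_primesBelow_zero (B := max B 2) (fun q _ => by positivity)
    (fun q hq => ?_) (fun q hq hBq => ?_)).comp (tendsto_add_atTop_nat 1)
  · have hden : (1 : ℝ) ≤ ((q - residueCount q {0, 2} : ℕ) : ℝ) := by
      exact_mod_cast one_le_sub_residueCount_zero_two hq
    refine div_le_of_le_mul₀ (by positivity) (by positivity) ?_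
    calc ((q - residueCount q T : ℕ) : ℝ) ≤ q := by exact_mod_cast Nat.sub_le _ _
      _ ≤ q * ((q - residueCount q {0, 2} : ℕ) : ℝ) := le_mul_of_one_le_right (by positivity) hden
  · have hBq' : B < q := by omega
    have h2q : ¬ q ∣ 2 := fun h => by have := Nat.le_of_dvd two_pos h; omega
    have hTq : #T ≤ q := (card_le_card fun t ht => mem_range.mpr ((hT t ht).trans_lt hBq')).trans
      (card_range q).le
    rw [residueCount_eq_card hT hBq', residueCount_pair, if_neg h2q, Nat.cast_sub hTq,
      Nat.cast_sub (by omega : 2 ≤ q), Nat.cast_two]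
    exact sub_div_sub_two_le_one_sub_one_div (by exact_mod_cast (by omega : 3 ≤ q))
      (by exact_mod_cast hcard)

theorem tendsto_Ncount_singleton_sub_div_zero {g : ℕ} (hg : 0 < g) :
    Tendsto (fun p => ((Ncount p [g] : ℝ) - admissibleCount (primorial p) {0, g}) /
      admissibleCount (primorial p) {0, 2}) atTop (𝓝 0) := by
  have hterm : ∀ S ∈ (Ioo 0 g).powerset.erase ∅, Tendsto (fun p =>
      (admissibleCount (primorial p) (insert 0 (insert g S)) : ℝ) /
        admissibleCount (primorial p) {0, 2}) atTop (𝓝 0) := by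
    intro S hS
    obtain ⟨hSne, hS⟩ := mem_erase.mp hS
    replace hS := mem_powerset.mp hS
    refine tendsto_admissibleCount_div_zero (B := g) (fun t ht => ?_) ?_
    · rcases mem_insert.mp ht with rfl | ht
      · exact Nat.zero_le g
      rcases mem_insert.mp ht with rfl | ht
      · exact le_rfl
      · exact (mem_Ioo.mp (hS ht)).2.le
    · obtain ⟨h0S, hgS⟩ := zero_notMem_insert_and_notMem_of_subset_Ioo hg hS
      rw [card_insert_of_notMem h0S, card_insert_of_notMem hgS]
      have := card_pos.mpr (nonempty_iff_ne_empty.mpr hSne)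
      omega
  refine squeeze_zero_norm (fun p => ?_)
    (by simpa only [sum_const_zero] using tendsto_finsetSum _ hterm)
  have hpos : (0 : ℝ) < admissibleCount (primorial p) {0, 2} := by
    exact_mod_cast admissibleCount_primorial_zero_two_pos p
  rw [norm_div, Real.norm_eq_abs, Real.norm_of_nonneg hpos.le, ← sum_div]
  exact div_le_div_of_nonneg_right (abs_Ncount_singleton_sub_le hg) hpos.le

theorem ratio_thirty_tendsto :
    Filter.Tendsto (fun p : ℕ => (Ncount p [30] : ℝ) / (Ncount p [2] : ℝ))
      (Filter.atTop ⊓ Filter.principal {p : ℕ | p.Prime}) (nhds (8 / 3)) := by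
  have h := (tendsto_Ncount_singleton_sub_div_zero (g := 30) (by norm_num)).add_const (8 / 3)
  rw [zero_add] at h
  refine (h.congr' ?_).mono_left inf_le_left
  filter_upwards [eventually_ge_atTop 5] with p hp
  have hpos : (0 : ℝ) < admissibleCount (primorial p) {0, 2} := by
    exact_mod_cast admissibleCount_primorial_zero_two_pos p
  have hkey : (admissibleCount (primorial p) {0, 30} : ℝ) =
      8 / 3 * admissibleCount (primorial p) {0, 2} := by
    have := three_mul_admissibleCount_zero_thirty hp
    rify at this
    linarith
  rw [Ncount_two (by omega), hkey]
  field_simp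
  ring
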